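/- arXiv:1101.5249 — 5 statements merged into one kernel-verified Lean document; each statement's English description precedes it below -/
import Mathlib

section
/- Let f be a basic feasible solution, i.e., a positive flow (Bf = b, f ≥ 0) whose support contains no cycle of the underlying undirected graph. Then for every arc e ∈ supp f one has b*_min ≤ f_e ≤ b*_max. -/
open scoped BigOperators

section PhysarumSetup

variable {V E : Type*} [Fintype V] [Fintype E] [DecidableEq V] [DecidableEq E]

/-- Incidence (boundary) matrix of the digraph given by `tail`/`head`:
`+1` if `i` is the tail of `e`, `-1` if `i` is the head of `e`, `0` otherwise. -/
def incMatrix (tail head : E → V) : Matrix V E ℝ :=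
  Matrix.of fun i e => if tail e = i then (1 : ℝ) else if head e = i then -1 else 0

/-- The digraph has no loops. -/
def NoLoops (tail head : E → V) : Prop := ∀ e, tail e ≠ head e

/-- The digraph has no multiple arcs. -/
def NoMultiple (tail head : E → V) : Prop :=
  ∀ e f, tail e = tail f → head e = head f → e = f

/-- Adjacency in the underlying undirected graph. -/
def Adj (tail head : E → V) (i j : V) : Prop :=
  ∃ e, (tail e = i ∧ head e = j) ∨ (tail e = j ∧ head e = i)

/-- The underlying undirected graph is connected. -/
def IsConnectedGraph (tail head : E → V) : Prop :=
  ∀ i j : V, Relation.ReflTransGen (Adj tail head) i j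

/-- `φ` is a flow with source vector `b`: `Bφ = b`. -/
def IsFlow (tail head : E → V) (b : V → ℝ) (φ : E → ℝ) : Prop :=
  (incMatrix tail head).mulVec φ = b

/-- Net supply `b(S)` of a vertex set `S`. -/
def netSupply (b : V → ℝ) (S : Finset V) : ℝ := ∑ i ∈ S, b i

/-- `b*_max = max_{S ⊆ V} |b(S)|`. -/
noncomputable def bstarMax (b : V → ℝ) : ℝ :=
  sSup {x | ∃ S : Finset V, x = |netSupply b S|}

/-- `b*_min = min { |b(S)| : S ⊆ V, b(S) ≠ 0 }`. -/
noncomputable def bstarMin (b : V → ℝ) : ℝ :=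
  sInf {x | ∃ S : Finset V, netSupply b S ≠ 0 ∧ x = |netSupply b S|}

/-- The support of an arc vector. -/
def suppE (φ : E → ℝ) : Set E := {e | φ e ≠ 0}

/-- An arc set is a forest in the underlying undirected graph:
equivalently, it supports no nonzero circulation. -/
def ForestSupport (tail head : E → V) (s : Set E) : Prop :=
  ∀ γ : E → ℝ, (incMatrix tail head).mulVec γ = 0 → (∀ e, γ e ≠ 0 → e ∈ s) → γ = 0

/-- A basic feasible solution: a positive flow whose support is a forest
in the underlying undirected graph. -/
def IsBFS (tail head : E → V) (b : V → ℝ) (f : E → ℝ) : Prop :=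
  IsFlow tail head b f ∧ (∀ e, 0 ≤ f e) ∧ ForestSupport tail head (suppE f)

/-- A vector is circulation free if its support contains no directed cycle:
equivalently, it supports no nonzero nonnegative circulation. -/
def CirculationFree (tail head : E → V) (φ : E → ℝ) : Prop :=
  ∀ γ : E → ℝ, (incMatrix tail head).mulVec γ = 0 → (∀ e, 0 ≤ γ e) →
    (∀ e, γ e ≠ 0 → φ e ≠ 0) → γ = 0

/-- The weighted graph Laplacian `L(σ) = B · diag(σ/ℓ) · Bᵀ`. -/
noncomputable def lap (tail head : E → V) (ℓ σ : E → ℝ) : Matrix V V ℝ :=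
  incMatrix tail head * Matrix.diagonal (fun e => σ e / ℓ e) * (incMatrix tail head).transpose

/-- The field (slope) of a potential: `Ψ(p)_{ij} = (p_i - p_j)/ℓ_{ij}`. -/
noncomputable def field (tail head : E → V) (ℓ : E → ℝ) (p : V → ℝ) : E → ℝ :=
  fun e => (p (tail e) - p (head e)) / ℓ e

/-- The set of vertices incident to an arc set `H`. -/
def VSet (tail head : E → V) (H : Set E) : Set V :=
  {i | ∃ e ∈ H, tail e = i ∨ head e = i}

/-- Undirected reachability using only arcs in `H`. -/
def UReach (tail head : E → V) (H : Set E) : V → V → Prop :=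
  Relation.ReflTransGen
    (fun i j => ∃ e ∈ H, (tail e = i ∧ head e = j) ∨ (tail e = j ∧ head e = i))

/-- `WalkLen tail head ℓ H i j L`: there is a walk in the underlying undirected
graph of `H` from `i` to `j` of total `ℓ`-length `L`. -/
inductive WalkLen (tail head : E → V) (ℓ : E → ℝ) (H : Set E) : V → V → ℝ → Prop
  | refl (i : V) : WalkLen tail head ℓ H i i 0
  | step {j k : V} {L : ℝ} (i : V) (e : E) (he : e ∈ H)
      (hik : (tail e = i ∧ head e = j) ∨ (tail e = j ∧ head e = i))
      (hw : WalkLen tail head ℓ H j k L) : WalkLen tail head ℓ H i k (ℓ e + L)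

/-- The minimal `ℓ`-length of a connecting walk within `H`. -/
noncomputable def wdist (tail head : E → V) (ℓ : E → ℝ) (H : Set E) (i j : V) : ℝ :=
  sInf {L | WalkLen tail head ℓ H i j L}

/-- The `ℓ`-diameter of `H`: the maximum of `wdist` over pairs of vertices lying in
a common component of `H`. -/
noncomputable def wdiam (tail head : E → V) (ℓ : E → ℝ) (H : Set E) : ℝ :=
  sSup {x | ∃ i j : V, (∃ L, WalkLen tail head ℓ H i j L) ∧ x = wdist tail head ℓ H i j}

/-- Maximum norm of `p` restricted to a vertex set `A`. -/
noncomputable def supNormOn (A : Set V) (p : V → ℝ) : ℝ := sSup {x | ∃ i ∈ A, x = |p i|}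

/-- Maximum norm of an arc vector. -/
noncomputable def eSupNorm (x : E → ℝ) : ℝ := sSup {r | ∃ e : E, r = |x e|}

/-- `min { σ_e : σ_e > 0 }`. -/
noncomputable def minPos (σ : E → ℝ) : ℝ := sInf {x | ∃ e, 0 < σ e ∧ x = σ e}

/-- `min_e ℓ_e`. -/
noncomputable def minLen (ℓ : E → ℝ) : ℝ := sInf {x | ∃ e : E, x = ℓ e}

/-- The cost `ℓᵀφ` of a flow. -/
def cost (ℓ φ : E → ℝ) : ℝ := ∑ e, ℓ e * φ e

/-- The transshipment problem is feasible: there is a positive flow. -/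
def Feasible (tail head : E → V) (b : V → ℝ) : Prop :=
  ∃ φ : E → ℝ, IsFlow tail head b φ ∧ ∀ e, 0 ≤ φ e

/-- `φ` is a minimum-cost positive flow. -/
def IsOptimal (tail head : E → V) (ℓ : E → ℝ) (b : V → ℝ) (φ : E → ℝ) : Prop :=
  IsFlow tail head b φ ∧ (∀ e, 0 ≤ φ e) ∧
    ∀ ψ : E → ℝ, IsFlow tail head b ψ → (∀ e, 0 ≤ ψ e) → cost ℓ φ ≤ cost ℓ ψ

/-- `Ĥ`: the set of arcs carried by some minimum-cost positive flow. -/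
def optSupport (tail head : E → V) (ℓ : E → ℝ) (b : V → ℝ) : Set E :=
  {e | ∃ φ : E → ℝ, IsOptimal tail head ℓ b φ ∧ 0 < φ e}

/-- The current `φ(t) = σ(t)·Ψ(p(t))` of the Physarum solver. -/
noncomputable def current (tail head : E → V) (ℓ : E → ℝ) (σ : ℝ → E → ℝ)
    (p : ℝ → V → ℝ) (t : ℝ) : E → ℝ :=
  fun e => σ t e * field tail head ℓ (p t) e

/-- The Physarum dynamics: `σ(t) > 0` and continuously differentiable on `[0,∞)`,
`L(σ(t)) p(t) = b`, and `σ' = φ - σ` where `φ(t) = σ(t)·Ψ(p(t))`. -/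
structure PhysarumDynamics (tail head : E → V) (ℓ : E → ℝ) (b : V → ℝ)
    (σ : ℝ → E → ℝ) (p : ℝ → V → ℝ) : Prop where
  pos : ∀ t : ℝ, 0 ≤ t → ∀ e, 0 < σ t e
  kirchhoff : ∀ t : ℝ, 0 ≤ t → (lap tail head ℓ (σ t)).mulVec (p t) = b
  contp : ContinuousOn (fun t => p t) (Set.Ici (0 : ℝ))
  dyn : ∀ t ∈ Set.Ici (0 : ℝ), ∀ e : E,
    HasDerivWithinAt (fun s => σ s e)
      (current tail head ℓ σ p t e - σ t e) (Set.Ici (0 : ℝ)) t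

/-- A directed walk from `i` to `j` using the listed arcs in order. -/
inductive DiWalk (tail head : E → V) : V → V → List E → Prop
  | nil (i : V) : DiWalk tail head i i []
  | cons {j k : V} {es : List E} (i : V) (e : E) (h1 : tail e = i) (h2 : head e = j)
      (hw : DiWalk tail head j k es) : DiWalk tail head i k (e :: es)

/-- Discrete `∞`-harmonicity of `p` at node `i` with respect to the arc set `H`:
the maximal in-slope equals the maximal out-slope, and both are nonnegative. -/
noncomputable def InfHarmAt (tail head : E → V) (ℓ : E → ℝ) (H : Set E)
    (p : V → ℝ) (i : V) : Prop :=
  sSup {r | ∃ e ∈ H, head e = i ∧ r = (p (tail e) - p i) / ℓ e}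
    = sSup {r | ∃ e ∈ H, tail e = i ∧ r = (p i - p (head e)) / ℓ e}
  ∧ 0 ≤ sSup {r | ∃ e ∈ H, tail e = i ∧ r = (p i - p (head e)) / ℓ e}

end PhysarumSetup

/-!
Removing an arc `e` from the support of a basic feasible solution `f` disconnects its endpoints,
since a path joining them would close a cycle through `e`. So the component `S` of `tail e` in
`supp f \ {e}` is a cut crossed by no support arc except `e`, and summing the flow equations
over `S` gives `b(S) = f e`.
-/

section CutBounds

open Matrix

variable {V E : Type*} {tail head : E → V}

lemma uReach_tail_iff_head {H : Set E} {i : V} {e : E} (he : e ∈ H) :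
    UReach tail head H i (tail e) ↔ UReach tail head H i (head e) :=
  ⟨fun h => h.tail ⟨e, he, .inl ⟨rfl, rfl⟩⟩,
    fun h => h.tail ⟨e, he, .inr ⟨rfl, rfl⟩⟩⟩

lemma bstarMin_le_abs_netSupply {b : V → ℝ} {S : Finset V} (hS : netSupply b S ≠ 0) :
    bstarMin b ≤ |netSupply b S| :=
  csInf_le ⟨0, by rintro _ ⟨T, -, rfl⟩; exact abs_nonneg _⟩ ⟨S, hS, rfl⟩

lemma abs_netSupply_le_bstarMax [Finite V] (b : V → ℝ) (S : Finset V) :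
    |netSupply b S| ≤ bstarMax b :=
  le_csSup ((Set.finite_range fun T : Finset V => |netSupply b T|).subset
    (by rintro _ ⟨T, rfl⟩; exact ⟨T, rfl⟩)).bddAbove ⟨S, rfl⟩

variable [DecidableEq V]

lemma incMatrix_apply_eq_sub (hloops : NoLoops tail head) (i : V) (e : E) :
    incMatrix tail head i e = (if tail e = i then 1 else 0) - (if head e = i then 1 else 0) := by
  have := hloops e
  simp only [incMatrix, of_apply]
  split_ifs <;> simp_all

variable [Fintype E]

lemma incMatrix_mulVec_single [DecidableEq E] (hloops : NoLoops tail head) (e : E) (c : ℝ) :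
    incMatrix tail head *ᵥ Pi.single e c = Pi.single (tail e) c - Pi.single (head e) c := by
  funext i
  simp only [mulVec, dotProduct_single, incMatrix_apply_eq_sub hloops, Pi.sub_apply,
    Pi.single_apply, eq_comm (a := i)]
  split_ifs <;> ring

lemma exists_incMatrix_mulVec_eq_of_uReach (hloops : NoLoops tail head) {H : Set E} {i j : V}
    (h : UReach tail head H i j) :
    ∃ γ : E → ℝ, incMatrix tail head *ᵥ γ = Pi.single i 1 - Pi.single j 1 ∧
      ∀ e, γ e ≠ 0 → e ∈ H := by
  classical
  induction h with
  | refl => exact ⟨0, by simp, by simp⟩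
  | @tail k l _ hkl ih =>
    obtain ⟨γ, hγ, hγH⟩ := ih
    obtain ⟨e, he, hends⟩ := hkl
    have hsupp (c : ℝ) : ∀ e', (γ + Pi.single e c : E → ℝ) e' ≠ 0 → e' ∈ H := by
      intro e' he'
      by_cases h : e' = e
      · exact h ▸ he
      · exact hγH e' (by simpa [h] using he')
    rcases hends with ⟨rfl, rfl⟩ | ⟨rfl, rfl⟩
    · refine ⟨γ + Pi.single e 1, ?_, hsupp 1⟩
      rw [mulVec_add, hγ, incMatrix_mulVec_single hloops]
      abel
    · refine ⟨γ + Pi.single e (-1), ?_, hsupp (-1)⟩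
      rw [mulVec_add, hγ, incMatrix_mulVec_single hloops, Pi.single_neg, Pi.single_neg]
      abel

lemma ForestSupport.not_uReach_diff_singleton (hloops : NoLoops tail head) {s : Set E}
    (hs : ForestSupport tail head s) {e : E} (he : e ∈ s) :
    ¬ UReach tail head (s \ {e}) (tail e) (head e) := by
  classical
  intro hreach
  obtain ⟨γ, hγ, hγs⟩ := exists_incMatrix_mulVec_eq_of_uReach hloops hreach
  have hγe : γ e = 0 := by_contra fun h => (hγs e h).2 rfl
  have hcycle : γ - Pi.single e 1 = 0 := by
    refine hs _ ?_ fun e' he' => ?_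
    · rw [mulVec_sub, hγ, incMatrix_mulVec_single hloops, sub_self]
    · by_cases h : e' = e
      · exact h ▸ he
      · exact (hγs e' (by simpa [h] using he')).1
  simpa [hγe] using congr_fun hcycle e

lemma netSupply_eq_sum_cut (hloops : NoLoops tail head) {b : V → ℝ} {φ : E → ℝ}
    (hφ : IsFlow tail head b φ) (S : Finset V) :
    netSupply b S =
      ∑ e, ((if tail e ∈ S then 1 else 0) - (if head e ∈ S then 1 else 0)) * φ e := by
  rw [netSupply, ← hφ]
  simp only [mulVec, dotProduct, incMatrix_apply_eq_sub hloops]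
  rw [Finset.sum_comm]
  refine Finset.sum_congr rfl fun e _ => ?_
  rw [← Finset.sum_mul, Finset.sum_sub_distrib, Finset.sum_ite_eq, Finset.sum_ite_eq]

lemma netSupply_eq_of_cut (hloops : NoLoops tail head) {b : V → ℝ} {φ : E → ℝ}
    (hφ : IsFlow tail head b φ) {S : Finset V} {e : E} (htail : tail e ∈ S)
    (hhead : head e ∉ S) (hS : ∀ e' ≠ e, φ e' ≠ 0 → (tail e' ∈ S ↔ head e' ∈ S)) :
    netSupply b S = φ e := by
  rw [netSupply_eq_sum_cut hloops hφ, Finset.sum_eq_single e]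
  · simp [htail, hhead]
  · intro e' _ hne
    by_cases hφe' : φ e' = 0
    · simp [hφe']
    · simp [hS e' hne hφe']
  · simp

lemma exists_netSupply_eq_of_forestSupport [Fintype V] (hloops : NoLoops tail head) {b : V → ℝ}
    {φ : E → ℝ} (hφ : IsFlow tail head b φ) (hforest : ForestSupport tail head (suppE φ))
    {e : E} (he : φ e ≠ 0) :
    ∃ S : Finset V, netSupply b S = φ e := by
  classical
  refine ⟨Finset.univ.filter (UReach tail head (suppE φ \ {e}) (tail e)),
    netSupply_eq_of_cut hloops hφ ?_ ?_ fun e' hne he' => ?_⟩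
  · exact Finset.mem_filter.2 ⟨Finset.mem_univ _, .refl⟩
  · simpa using hforest.not_uReach_diff_singleton hloops he
  · simpa using uReach_tail_iff_head (show e' ∈ suppE φ \ {e} from ⟨he', hne⟩)

end CutBounds

theorem statement_1_general {V E : Type*} [Fintype V] [Fintype E] [DecidableEq V]
    (tail head : E → V)
    (hloops : NoLoops tail head)
    (b : V → ℝ)
    (f : E → ℝ) (hf : IsBFS tail head b f) :
    ∀ e : E, f e ≠ 0 → bstarMin b ≤ f e ∧ f e ≤ bstarMax b := by
  intro e he
  obtain ⟨hflow, hnonneg, hforest⟩ := hf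
  obtain ⟨S, hS⟩ := exists_netSupply_eq_of_forestSupport hloops hflow hforest he
  have habs : |netSupply b S| = f e := by rw [hS, abs_of_nonneg (hnonneg e)]
  exact ⟨habs ▸ bstarMin_le_abs_netSupply (hS ▸ he), habs ▸ abs_netSupply_le_bstarMax b S⟩

theorem statement_1 {V E : Type*} [Fintype V] [Fintype E] [DecidableEq V] [DecidableEq E]
    (tail head : E → V)
    (hloops : NoLoops tail head) (hmult : NoMultiple tail head)
    (hconn : IsConnectedGraph tail head)
    (b : V → ℝ) (hb : ∑ i, b i = 0)
    (f : E → ℝ) (hf : IsBFS tail head b f) :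
    ∀ e : E, f e ≠ 0 → bstarMin b ≤ f e ∧ f e ≤ bstarMax b :=
  statement_1_general tail head hloops b f hf
end

section
/- Let σ ∈ ℝ^E with σ > 0, let p ∈ ℝ^V solve Kirchhoff's equation L(σ)p = b, and let φ = σ·Ψ(p) (componentwise) be the associated current. If φ = σ (componentwise) and Ψ(p)_e ≤ 1 for all e ∈ E, then φ is an optimal solution of the primal transshipment problem min{ℓᵀx : Bx = b, x ≥ 0} and p is an optimal solution of the dual problem max{bᵀp : Bᵀp ≤ ℓ}. -/
open scoped BigOperators

lemma inc_pair {V E : Type*} [Fintype V] [DecidableEq V] (tail head : E → V) (e : E)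
    (h : tail e ≠ head e) (q : V → ℝ) :
    ∑ i, incMatrix tail head i e * q i = q (tail e) - q (head e) := by
  have key : ∀ i, incMatrix tail head i e * q i
      = (if tail e = i then q i else 0) - (if head e = i then q i else 0) := by
    intro i
    simp only [incMatrix, Matrix.of_apply]
    by_cases h1 : tail e = i
    · have : head e ≠ i := fun hh => h (h1.trans hh.symm)
      simp [h1, this]
    · by_cases h2 : head e = i <;> simp [h1, h2]
  simp [key, Finset.sum_sub_distrib, Finset.sum_ite_eq]

lemma flow_pair {V E : Type*} [Fintype V] [Fintype E] [DecidableEq V]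
    (tail head : E → V) (hloops : NoLoops tail head) (b : V → ℝ) (ψ : E → ℝ)
    (hψ : (incMatrix tail head).mulVec ψ = b) (q : V → ℝ) :
    ∑ i, b i * q i = ∑ e, ψ e * (q (tail e) - q (head e)) := by
  have : ∑ i, b i * q i = ∑ i, (∑ e, incMatrix tail head i e * ψ e) * q i := by
    apply Finset.sum_congr rfl
    intro i _
    rw [← hψ]
    simp [Matrix.mulVec, dotProduct]
  rw [this]
  simp_rw [Finset.sum_mul]
  rw [Finset.sum_comm]
  apply Finset.sum_congr rfl
  intro e _
  have := inc_pair tail head e (hloops e) q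
  calc ∑ i, incMatrix tail head i e * ψ e * q i
      = ψ e * ∑ i, incMatrix tail head i e * q i := by
        rw [Finset.mul_sum]; apply Finset.sum_congr rfl; intro i _; ring
    _ = ψ e * (q (tail e) - q (head e)) := by rw [this]

theorem statement_8 {V E : Type*} [Fintype V] [Fintype E] [DecidableEq V] [DecidableEq E]
    (tail head : E → V)
    (hloops : NoLoops tail head) (hmult : NoMultiple tail head)
    (hconn : IsConnectedGraph tail head)
    (ℓ : E → ℝ) (hℓ : ∀ e, 0 < ℓ e)
    (b : V → ℝ) (hb : ∑ i, b i = 0)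
    (σ : E → ℝ) (hσ : ∀ e, 0 < σ e)
    (p : V → ℝ) (hp : (lap tail head ℓ σ).mulVec p = b)
    (hfix : ∀ e, σ e * field tail head ℓ p e = σ e)
    (hfeas : ∀ e, field tail head ℓ p e ≤ 1) :
    IsOptimal tail head ℓ b (fun e => σ e * field tail head ℓ p e) ∧
      (∀ e, p (tail e) - p (head e) ≤ ℓ e) ∧
      ∀ q : V → ℝ, (∀ e, q (tail e) - q (head e) ≤ ℓ e) →
        ∑ i, b i * q i ≤ ∑ i, b i * p i := by
  have hΨ1 : ∀ e, field tail head ℓ p e = 1 := by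
    intro e
    have h := hfix e
    have : σ e * field tail head ℓ p e = σ e * 1 := by rw [mul_one]; exact h
    exact mul_left_cancel₀ (hσ e).ne' this
  have hdiff : ∀ e, p (tail e) - p (head e) = ℓ e := by
    intro e
    have h1 := hΨ1 e
    unfold field at h1
    rwa [div_eq_one_iff_eq (hℓ e).ne'] at h1
  have hφ : (fun e => σ e * field tail head ℓ p e) = σ := funext hfix
  -- the current σ is a flow
  have hBt : (incMatrix tail head).transpose.mulVec p = fun e => ℓ e := by
    funext e
    simp only [Matrix.mulVec, dotProduct, Matrix.transpose_apply]
    rw [inc_pair tail head e (hloops e) p]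
    exact hdiff e
  have hflow : (incMatrix tail head).mulVec σ = b := by
    rw [← hp]
    unfold lap
    have hD : (Matrix.diagonal (fun e => σ e / ℓ e)).mulVec (fun e => ℓ e) = σ := by
      funext e
      rw [Matrix.mulVec_diagonal]
      exact div_mul_cancel₀ _ (hℓ e).ne'
    rw [← Matrix.mulVec_mulVec, ← Matrix.mulVec_mulVec, hBt, hD]
  have hσ0 : ∀ e, (0:ℝ) ≤ σ e := fun e => (hσ e).le
  -- cost of any feasible flow equals bᵀp
  have costeq : ∀ ψ : E → ℝ, (incMatrix tail head).mulVec ψ = b →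
      cost ℓ ψ = ∑ i, b i * p i := by
    intro ψ hψ
    rw [flow_pair tail head hloops b ψ hψ p]
    unfold cost
    apply Finset.sum_congr rfl
    intro e _
    rw [hdiff e]; ring
  refine ⟨⟨?_, ?_, ?_⟩, ?_, ?_⟩
  · show IsFlow tail head b _
    unfold IsFlow
    rw [hφ]; exact hflow
  · intro e
    show (0:ℝ) ≤ σ e * field tail head ℓ p e
    rw [hfix e]; exact hσ0 e
  · intro ψ hψ hψ0
    rw [show cost ℓ (fun e => σ e * field tail head ℓ p e) = cost ℓ σ by rw [hφ]]
    rw [costeq σ hflow, costeq ψ hψ]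
  · intro e; rw [hdiff e]
  · intro q hq
    rw [flow_pair tail head hloops b σ hflow q, flow_pair tail head hloops b σ hflow p]
    apply Finset.sum_le_sum
    intro e _
    rw [hdiff e]
    exact mul_le_mul_of_nonneg_left (hq e) (hσ0 e)
end

section
/- Let σ ∈ ℝ^E with σ > 0, let p ∈ ℝ^V solve Kirchhoff's equation L(σ)p = b, and let φ = σ·Ψ(p) be the associated current (so Bφ = b). Then |φ_e| ≤ b*_max for every arc e ∈ E. -/
open scoped BigOperators

set_option linter.unusedSectionVars false

section Aux
variable {V E : Type*} [Fintype V] [Fintype E] [DecidableEq V] [DecidableEq E]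

lemma inc_mul_split (tail head : E → V) (hloops : NoLoops tail head)
    (e : E) (i : V) (x : ℝ) :
    incMatrix tail head i e * x
      = (if tail e = i then x else 0) - (if head e = i then x else 0) := by
  have : incMatrix tail head i e = if tail e = i then (1:ℝ) else if head e = i then -1 else 0 := rfl
  rw [this]
  by_cases h1 : tail e = i
  · have h2 : ¬ head e = i := fun h => hloops e (h1.trans h.symm)
    simp [h1, h2]
  · by_cases h2 : head e = i <;> simp [h1, h2]

lemma flow_eq (tail head : E → V) (hloops : NoLoops tail head)
    (ℓ σ : E → ℝ) (p : V → ℝ) :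
    (incMatrix tail head).mulVec (fun e => σ e * field tail head ℓ p e)
      = (lap tail head ℓ σ).mulVec p := by
  unfold lap
  have harg : (Matrix.diagonal (fun e => σ e / ℓ e)).mulVec
      ((incMatrix tail head).transpose.mulVec p) = fun e => σ e * field tail head ℓ p e := by
    funext e
    have h1 : (incMatrix tail head).transpose.mulVec p e = p (tail e) - p (head e) := by
      simp only [Matrix.mulVec, dotProduct, Matrix.transpose_apply]
      rw [Finset.sum_congr rfl (fun i _ => inc_mul_split tail head hloops e i (p i))]
      simp [Finset.sum_sub_distrib]
    simp [Matrix.mulVec_diagonal, h1, field, div_mul_eq_mul_div, mul_div_assoc]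
  rw [← Matrix.mulVec_mulVec, ← Matrix.mulVec_mulVec, harg]

lemma netSupply_eq_sum (tail head : E → V) (hloops : NoLoops tail head)
    (b : V → ℝ) (φ : E → ℝ) (hφ : (incMatrix tail head).mulVec φ = b) (S : Finset V) :
    netSupply b S
      = ∑ e, φ e * ((if tail e ∈ S then (1:ℝ) else 0) - (if head e ∈ S then 1 else 0)) := by
  unfold netSupply
  rw [← hφ]
  simp only [Matrix.mulVec, dotProduct]
  rw [Finset.sum_comm]
  refine Finset.sum_congr rfl (fun e _ => ?_)
  rw [Finset.sum_congr rfl (fun i _ => inc_mul_split tail head hloops e i (φ e))]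
  rw [Finset.sum_sub_distrib]
  simp [mul_sub, mul_ite, mul_one, mul_zero, mul_comm]

lemma abs_netSupply_le (b : V → ℝ) (S : Finset V) : |netSupply b S| ≤ bstarMax b := by
  have hfin : {x | ∃ S : Finset V, x = |netSupply b S|}.Finite := by
    have : {x | ∃ S : Finset V, x = |netSupply b S|}
        = Set.range (fun S : Finset V => |netSupply b S|) := by
      ext x; simp [Set.range, eq_comm]
    rw [this]; exact Set.finite_range _
  exact le_csSup hfin.bddAbove ⟨S, rfl⟩

theorem statement_9' {V E : Type*} [Fintype V] [Fintype E] [DecidableEq V] [DecidableEq E]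
    (tail head : E → V)
    (hloops : NoLoops tail head)
    (ℓ : E → ℝ) (hℓ : ∀ e, 0 < ℓ e)
    (b : V → ℝ)
    (σ : E → ℝ) (hσ : ∀ e, 0 < σ e)
    (p : V → ℝ) (hp : (lap tail head ℓ σ).mulVec p = b) :
    ∀ e : E, |σ e * field tail head ℓ p e| ≤ bstarMax b := by
  intro e0
  set φ : E → ℝ := fun e => σ e * field tail head ℓ p e with hφdef
  have hflow : (incMatrix tail head).mulVec φ = b := by
    rw [hφdef, flow_eq tail head hloops ℓ σ p, hp]
  -- general threshold estimate
  have key : ∀ T : ℝ, (if T ≤ p (tail e0) then (1:ℝ) else 0) - (if T ≤ p (head e0) then 1 else 0)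
      = 1 ∨ (if T ≤ p (tail e0) then (1:ℝ) else 0) - (if T ≤ p (head e0) then 1 else 0) = -1 →
      φ e0 * ((if T ≤ p (tail e0) then (1:ℝ) else 0) - (if T ≤ p (head e0) then 1 else 0))
        ≤ bstarMax b := by
    intro T _
    set S : Finset V := Finset.univ.filter (fun i => T ≤ p i) with hS
    have hmem : ∀ i : V, i ∈ S ↔ T ≤ p i := by intro i; simp [hS]
    have hsum := netSupply_eq_sum tail head hloops b φ hflow S
    have hterm : ∀ e : E, 0 ≤ φ e * ((if tail e ∈ S then (1:ℝ) else 0) - (if head e ∈ S then 1 else 0)) := by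
      intro e
      by_cases h1 : tail e ∈ S <;> by_cases h2 : head e ∈ S <;> simp [h1, h2]
      · -- tail in, head out: φ e ≥ 0
        have ht : T ≤ p (tail e) := (hmem _).1 h1
        have hh : ¬ T ≤ p (head e) := fun h => h2 ((hmem _).2 h)
        have : 0 ≤ field tail head ℓ p e := by
          apply div_nonneg _ (hℓ e).le; push_neg at hh; linarith
        exact mul_nonneg (hσ e).le this
      · -- tail out, head in: φ e ≤ 0
        have ht : ¬ T ≤ p (tail e) := fun h => h1 ((hmem _).2 h)
        have hh : T ≤ p (head e) := (hmem _).1 h2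
        have : field tail head ℓ p e ≤ 0 := by
          apply div_nonpos_of_nonpos_of_nonneg _ (hℓ e).le; push_neg at ht; linarith
        have := mul_nonpos_of_nonneg_of_nonpos (hσ e).le this
        simpa [hφdef] using this
    have hle : φ e0 * ((if tail e0 ∈ S then (1:ℝ) else 0) - (if head e0 ∈ S then 1 else 0))
        ≤ netSupply b S := by
      rw [hsum]
      exact Finset.single_le_sum (fun e _ => hterm e) (Finset.mem_univ e0)
    have hmemt : (tail e0 ∈ S) = (T ≤ p (tail e0)) := by
      simp [hmem]
    calc φ e0 * ((if T ≤ p (tail e0) then (1:ℝ) else 0) - (if T ≤ p (head e0) then 1 else 0))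
        = φ e0 * ((if tail e0 ∈ S then (1:ℝ) else 0) - (if head e0 ∈ S then 1 else 0)) := by
          simp only [hmem]
      _ ≤ netSupply b S := hle
      _ ≤ |netSupply b S| := le_abs_self _
      _ ≤ bstarMax b := abs_netSupply_le b S
  rcases lt_trichotomy (p (head e0)) (p (tail e0)) with h | h | h
  · -- φ e0 ≥ 0, use T = p (tail e0)
    have hnn : 0 ≤ φ e0 :=
      mul_nonneg (hσ e0).le (div_nonneg (by linarith) (hℓ e0).le)
    have heq : σ e0 * field tail head ℓ p e0 = φ e0 := rfl
    rw [heq, abs_of_nonneg hnn]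
    have := key (p (tail e0)) (by left; simp [not_le.mpr h])
    simpa [not_le.mpr h] using this
  · -- zero
    have : φ e0 = 0 := by simp [hφdef, field, h]
    have heq : σ e0 * field tail head ℓ p e0 = φ e0 := rfl
    rw [heq, this, abs_zero]
    have h0 := abs_netSupply_le b (∅ : Finset V)
    simpa [netSupply] using h0
  · -- φ e0 ≤ 0, use T = p (head e0)
    have hnp : φ e0 ≤ 0 :=
      mul_nonpos_of_nonneg_of_nonpos (hσ e0).le
        (div_nonpos_of_nonpos_of_nonneg (by linarith) (hℓ e0).le)
    have heq : σ e0 * field tail head ℓ p e0 = φ e0 := rfl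
    rw [heq, abs_of_nonpos hnp]
    have := key (p (head e0)) (by right; simp [not_le.mpr h])
    have h2 : φ e0 * ((if p (head e0) ≤ p (tail e0) then (1:ℝ) else 0) - 1) ≤ bstarMax b := by
      simpa using this
    rw [if_neg (not_le.mpr h)] at h2
    linarith [h2]
end Aux


theorem statement_9 {V E : Type*} [Fintype V] [Fintype E] [DecidableEq V] [DecidableEq E]
    (tail head : E → V)
    (hloops : NoLoops tail head) (hmult : NoMultiple tail head)
    (hconn : IsConnectedGraph tail head)
    (ℓ : E → ℝ) (hℓ : ∀ e, 0 < ℓ e)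
    (b : V → ℝ) (hb : ∑ i, b i = 0)
    (σ : E → ℝ) (hσ : ∀ e, 0 < σ e)
    (p : V → ℝ) (hp : (lap tail head ℓ σ).mulVec p = b) :
    ∀ e : E, |σ e * field tail head ℓ p e| ≤ bstarMax b := by
  exact statement_9' tail head hloops ℓ hℓ b σ hσ p hp
end

section
/- Under the Physarum dynamics, for all t > 0 the discounted time-averaged flow φ̃(t) := (1/(1−e^{−t}))·∫₀ᵗ φ(s)·e^{−(t−s)} ds satisfies Bφ̃(t) = b, the representation σ(t) = (1−e^{−t})·φ̃(t) + e^{−t}·σ(0) holds, and consequently φ̃_e(t) ≥ −σ_e(0)·e^{−t}/(1−e^{−t}) for every arc e ∈ E. -/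
open scoped BigOperators

/-- The discounted time-averaged flow
`φ̃(t) = (1/(1-e^{-t})) ∫₀ᵗ φ(s) e^{-(t-s)} ds`. -/
noncomputable def avgFlow {V E : Type*} [Fintype V] [Fintype E] [DecidableEq V]
    [DecidableEq E] (tail head : E → V) (ℓ : E → ℝ) (σ : ℝ → E → ℝ) (p : ℝ → V → ℝ)
    (t : ℝ) : E → ℝ :=
  fun e => (1 - Real.exp (-t))⁻¹ *
    ∫ s in (0:ℝ)..t, current tail head ℓ σ p s e * Real.exp (-(t - s))

/-!
Multiplying `σ' = φ - σ` by `e^{-(t-s)}` and integrating over `s ∈ [0, t]` gives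
`∫₀ᵗ φ(s) e^{-(t-s)} ds = σ(t) - e^{-t} σ(0)`, which is the representation of `σ(t)`.
Since `Bᵀp = (p_tail - p_head)`, each current is `φ(s) = diag(σ/ℓ) Bᵀ p(s)`, so
Kirchhoff's law `L(σ(s)) p(s) = b` says `Bφ(s) = b`; and `φ̃(t)` is an average of the `φ(s)`
against weights of total mass `∫₀ᵗ e^{-(t-s)} ds = 1 - e^{-t}`, hence also a flow.
The lower bound is the representation together with `σ(t) > 0`.
-/

open Real Set MeasureTheory
open scoped Matrix

lemma Matrix.mulVec_weightedAverage_eq {m n : Type*} [Fintype n] (M : Matrix m n ℝ)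
    (v : m → ℝ) {f : ℝ → n → ℝ} {w : ℝ → ℝ} {a c : ℝ} (hac : a ≤ c)
    (hf : ∀ s ∈ Icc a c, M *ᵥ f s = v)
    (hint : ∀ j, IntervalIntegrable (fun s => f s j * w s) volume a c)
    (hW : ∫ s in a..c, w s ≠ 0) :
    M *ᵥ (fun j => (∫ s in a..c, w s)⁻¹ * ∫ s in a..c, f s j * w s) = v := by
  funext i
  have hpull : ∑ j, M i j * ∫ s in a..c, f s j * w s
      = ∫ s in a..c, (M *ᵥ f s) i * w s := by
    simp_rw [← intervalIntegral.integral_const_mul, Matrix.mulVec, dotProduct, Finset.sum_mul,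
      mul_assoc]
    exact (intervalIntegral.integral_finsetSum fun j _ => (hint j).const_mul (M i j)).symm
  have hconst : ∫ s in a..c, (M *ᵥ f s) i * w s = v i * ∫ s in a..c, w s := by
    rw [← intervalIntegral.integral_const_mul]
    refine intervalIntegral.integral_congr fun s hs => ?_
    rw [uIcc_of_le hac] at hs
    simp only [hf s hs]
  change ∑ j, M i j * ((∫ s in a..c, w s)⁻¹ * ∫ s in a..c, f s j * w s) = v i
  simp_rw [mul_left_comm (M i _)]
  rw [← Finset.mul_sum, hpull, hconst, mul_comm (v i), inv_mul_cancel_left₀ hW]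

lemma integral_mul_exp_neg_sub_eq_of_hasDerivWithinAt {x u : ℝ → ℝ}
    (hx : ∀ s ∈ Ici (0 : ℝ), HasDerivWithinAt x (u s - x s) (Ici 0) s)
    (hu : ContinuousOn u (Ici 0)) {t : ℝ} (ht : 0 ≤ t) :
    ∫ s in (0 : ℝ)..t, u s * exp (-(t - s)) = x t - exp (-t) * x 0 := by
  have hderiv : ∀ s ∈ Ici (0 : ℝ), HasDerivWithinAt (fun r => exp (-(t - r)) * x r)
      (u s * exp (-(t - s))) (Ici 0) s := by
    intro s hs
    have hexp : HasDerivAt (fun r => exp (-(t - r))) (exp (-(t - s))) s := by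
      simpa using ((hasDerivAt_id s).const_sub t).neg.exp
    exact (hexp.hasDerivWithinAt.mul (hx s hs)).congr_deriv (by ring)
  have hcont : ContinuousOn (fun r => exp (-(t - r)) * x r) (Icc 0 t) :=
    fun s hs => (hderiv s hs.1).continuousWithinAt.mono Icc_subset_Ici_self
  have hint : IntervalIntegrable (fun s => u s * exp (-(t - s))) volume 0 t :=
    ((hu.mono Icc_subset_Ici_self).mul (by fun_prop)).intervalIntegrable_of_Icc ht
  rw [intervalIntegral.integral_eq_sub_of_hasDeriv_right_of_le ht hcont
    (fun s hs => (hderiv s hs.1.le).mono (Ioi_subset_Ici hs.1.le)) hint]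
  simp

lemma integral_exp_neg_sub (t : ℝ) : ∫ s in (0 : ℝ)..t, exp (-(t - s)) = 1 - exp (-t) := by
  simp_rw [neg_sub]
  rw [intervalIntegral.integral_comp_sub_right (fun s => exp s), integral_exp]
  simp

section Physarum

variable {V E : Type*} [Fintype V] [DecidableEq V] {tail head : E → V}

lemma incMatrix_transpose_mulVec (hloops : NoLoops tail head) (q : V → ℝ) :
    (incMatrix tail head)ᵀ *ᵥ q = fun e => q (tail e) - q (head e) := by
  funext e
  have hne := hloops e
  simp only [Matrix.mulVec, dotProduct, Matrix.transpose_apply, incMatrix, Matrix.of_apply]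
  rw [Fintype.sum_eq_add (tail e) (head e) hne
    (fun i hi => by simp [Ne.symm hi.1, Ne.symm hi.2])]
  simp [hne, sub_eq_add_neg]

variable [Fintype E] [DecidableEq E] {ℓ : E → ℝ}

lemma mul_field_eq_diagonal_mulVec (hloops : NoLoops tail head)
    (s : E → ℝ) (q : V → ℝ) :
    (fun e => s e * field tail head ℓ q e) =
      Matrix.diagonal (fun e => s e / ℓ e) *ᵥ ((incMatrix tail head)ᵀ *ᵥ q) := by
  funext e
  rw [Matrix.mulVec_diagonal, incMatrix_transpose_mulVec hloops, field, mul_div_assoc',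
    div_mul_eq_mul_div]

namespace PhysarumDynamics

variable {b : V → ℝ} {σ : ℝ → E → ℝ} {p : ℝ → V → ℝ}

lemma isFlow_current (hdyn : PhysarumDynamics tail head ℓ b σ p) (hloops : NoLoops tail head)
    {t : ℝ} (ht : 0 ≤ t) :
    IsFlow tail head b (current tail head ℓ σ p t) := by
  rw [IsFlow, ← hdyn.kirchhoff t ht, lap, ← Matrix.mulVec_mulVec, ← Matrix.mulVec_mulVec]
  exact congrArg _ (mul_field_eq_diagonal_mulVec hloops (σ t) (p t))

lemma continuousOn_current (hdyn : PhysarumDynamics tail head ℓ b σ p) (e : E) :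
    ContinuousOn (fun t => current tail head ℓ σ p t e) (Ici 0) := by
  have hσ : ContinuousOn (fun t => σ t e) (Ici 0) :=
    fun t ht => (hdyn.dyn t ht e).continuousWithinAt
  have hp (i : V) : ContinuousOn (fun t => p t i) (Ici 0) :=
    (continuous_apply i).comp_continuousOn hdyn.contp
  exact hσ.mul (((hp (tail e)).sub (hp (head e))).div_const _)

end PhysarumDynamics

end Physarum

theorem statement_10_general {V E : Type*} [Fintype V] [Fintype E] [DecidableEq V] [DecidableEq E]
    (tail head : E → V)
    (hloops : NoLoops tail head)
    (ℓ : E → ℝ)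
    (b : V → ℝ)
    (σ : ℝ → E → ℝ) (p : ℝ → V → ℝ)
    (hdyn : PhysarumDynamics tail head ℓ b σ p) :
    ∀ t : ℝ, 0 < t →
      IsFlow tail head b (avgFlow tail head ℓ σ p t) ∧
      (∀ e, σ t e = (1 - Real.exp (-t)) * avgFlow tail head ℓ σ p t e +
        Real.exp (-t) * σ 0 e) ∧
      (∀ e, -(σ 0 e) * Real.exp (-t) / (1 - Real.exp (-t)) ≤
        avgFlow tail head ℓ σ p t e) := by
  intro t ht
  have hdecay : 0 < 1 - exp (-t) := sub_pos.2 (exp_lt_one_iff.2 (neg_lt_zero.2 ht))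
  have hrep (e : E) :
      σ t e = (1 - exp (-t)) * avgFlow tail head ℓ σ p t e + exp (-t) * σ 0 e := by
    rw [avgFlow, mul_inv_cancel_left₀ hdecay.ne', integral_mul_exp_neg_sub_eq_of_hasDerivWithinAt
      (hdyn.dyn · · e) (hdyn.continuousOn_current e) ht.le]
    ring
  refine ⟨?_, hrep, fun e => ?_⟩
  · have hint (e : E) : IntervalIntegrable
        (fun s => current tail head ℓ σ p s e * exp (-(t - s))) volume 0 t :=
      (((hdyn.continuousOn_current e).mono Icc_subset_Ici_self).mul
        (by fun_prop)).intervalIntegrable_of_Icc ht.le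
    have hflow := (incMatrix tail head).mulVec_weightedAverage_eq b ht.le
      (fun s hs => hdyn.isFlow_current hloops hs.1) hint
      ((integral_exp_neg_sub t).trans_ne hdecay.ne')
    rwa [integral_exp_neg_sub] at hflow
  · rw [div_le_iff₀ hdecay]
    linarith [hrep e, hdyn.pos t ht.le e]

theorem statement_10 {V E : Type*} [Fintype V] [Fintype E] [DecidableEq V] [DecidableEq E]
    (tail head : E → V)
    (hloops : NoLoops tail head) (hmult : NoMultiple tail head)
    (hconn : IsConnectedGraph tail head)
    (ℓ : E → ℝ) (hℓ : ∀ e, 0 < ℓ e)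
    (b : V → ℝ) (hb : ∑ i, b i = 0)
    (σ : ℝ → E → ℝ) (p : ℝ → V → ℝ)
    (hdyn : PhysarumDynamics tail head ℓ b σ p) :
    ∀ t : ℝ, 0 < t →
      IsFlow tail head b (avgFlow tail head ℓ σ p t) ∧
      (∀ e, σ t e = (1 - Real.exp (-t)) * avgFlow tail head ℓ σ p t e +
        Real.exp (-t) * σ 0 e) ∧
      (∀ e, -(σ 0 e) * Real.exp (-t) / (1 - Real.exp (-t)) ≤
        avgFlow tail head ℓ σ p t e) :=
  statement_10_general tail head hloops ℓ b σ p hdyn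
end

section
/- Assume the transshipment problem is feasible. Under the Physarum dynamics (with p(t) normalized so that min_i p_i(t) = 0 for each t), there exists a constant p_max > 0 such that ‖p(t)‖_∞ < p_max for all t ≥ 0. -/
open scoped BigOperators

section AuxProof

variable {V E : Type*} [Fintype V] [Fintype E] [DecidableEq V] [DecidableEq E]

lemma aux_sum_inc_mul (tail head : E → V) (e : E) (hne : tail e ≠ head e)
    (g : V → ℝ) (S : Finset V) :
    ∑ v ∈ S, incMatrix tail head v e * g v
      = (if tail e ∈ S then g (tail e) else 0) - (if head e ∈ S then g (head e) else 0) := by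
  have hpt : ∀ v ∈ S, incMatrix tail head v e * g v
      = (if v = tail e then g v else 0) - (if v = head e then g v else 0) := by
    intro v _
    simp only [incMatrix, Matrix.of_apply]
    by_cases h1 : tail e = v
    · have h2 : ¬ v = head e := fun hh => hne (h1.trans hh)
      rw [if_pos h1, if_pos h1.symm, if_neg h2, one_mul, sub_zero]
    · by_cases h2 : head e = v
      · rw [if_neg h1, if_pos h2, if_neg (fun hh : v = tail e => h1 hh.symm),
          if_pos h2.symm, zero_sub, neg_one_mul]
      · rw [if_neg h1, if_neg h2, if_neg (fun hh : v = tail e => h1 hh.symm),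
          if_neg (fun hh : v = head e => h2 hh.symm), zero_mul, sub_zero]
  rw [Finset.sum_congr rfl hpt, Finset.sum_sub_distrib,
    Finset.sum_ite_eq' S (tail e) g, Finset.sum_ite_eq' S (head e) g]

lemma aux_transpose_mulVec (tail head : E → V) (e : E) (hne : tail e ≠ head e)
    (g : V → ℝ) :
    (incMatrix tail head).transpose.mulVec g e = g (tail e) - g (head e) := by
  have h : (incMatrix tail head).transpose.mulVec g e
      = ∑ v, incMatrix tail head v e * g v := by
    simp [Matrix.mulVec, Matrix.transpose_apply, dotProduct]
  rw [h, aux_sum_inc_mul tail head e hne g Finset.univ]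
  simp

lemma aux_cut_eq (tail head : E → V) (hloops : NoLoops tail head)
    (f : E → ℝ) (S : Finset V) :
    ∑ v ∈ S, (incMatrix tail head).mulVec f v
      = ∑ e, ((if tail e ∈ S then (1:ℝ) else 0) - (if head e ∈ S then 1 else 0)) * f e := by
  have h1 : ∑ v ∈ S, (incMatrix tail head).mulVec f v
      = ∑ e, ∑ v ∈ S, incMatrix tail head v e * f e := by
    rw [Finset.sum_comm]
    refine Finset.sum_congr rfl fun v _ => ?_
    simp [Matrix.mulVec, dotProduct]
  rw [h1]
  refine Finset.sum_congr rfl fun e _ => ?_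
  rw [aux_sum_inc_mul tail head e (hloops e) (fun _ => f e) S]
  by_cases h1 : tail e ∈ S <;> by_cases h2 : head e ∈ S <;> simp [h1, h2]

lemma aux_cross (tail head : E → V) (S : Finset V) :
    ∀ {i j : V}, Relation.ReflTransGen (Adj tail head) i j → i ∈ S → j ∉ S →
    ∃ e, (tail e ∈ S ∧ head e ∉ S) ∨ (tail e ∉ S ∧ head e ∈ S) := by
  intro i j h
  induction h with
  | refl => intro hi hj; exact absurd hi hj
  | @tail k j' hsteps hadj ih =>
    intro hi hj
    by_cases hk : k ∈ S
    · obtain ⟨e, he | he⟩ := hadj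
      · exact ⟨e, Or.inl ⟨he.1.symm ▸ hk, he.2.symm ▸ hj⟩⟩
      · exact ⟨e, Or.inr ⟨he.1.symm ▸ hj, he.2.symm ▸ hk⟩⟩
    · exact ih hi hk

lemma aux_current_flow (tail head : E → V) (hloops : NoLoops tail head)
    (ℓ : E → ℝ) (b : V → ℝ) (σv : E → ℝ) (pv : V → ℝ)
    (hk : (lap tail head ℓ σv).mulVec pv = b) :
    (incMatrix tail head).mulVec (fun e => σv e * ((pv (tail e) - pv (head e)) / ℓ e)) = b := by
  rw [← hk]
  unfold lap
  rw [← Matrix.mulVec_mulVec, ← Matrix.mulVec_mulVec]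
  have hfun : (fun e => σv e * ((pv (tail e) - pv (head e)) / ℓ e))
      = ((Matrix.diagonal fun e => σv e / ℓ e).mulVec ((incMatrix tail head).transpose.mulVec pv)) := by
    funext e
    rw [Matrix.mulVec_diagonal, aux_transpose_mulVec tail head e (hloops e) pv,
      div_mul_eq_mul_div, mul_div_assoc]
  rw [hfun]

end AuxProof
section AuxProof2

variable {V E : Type*} [Fintype V] [Fintype E] [DecidableEq V] [DecidableEq E]
variable {tail head : E → V} {ℓ : E → ℝ} {b : V → ℝ} {σ : ℝ → E → ℝ} {p : ℝ → V → ℝ}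

lemma aux_x_contOn (hdyn : PhysarumDynamics tail head ℓ b σ p) (e : E) :
    ContinuousOn (fun s => σ s e) (Set.Ici (0:ℝ)) :=
  fun s hs => (hdyn.dyn s hs e).continuousWithinAt

lemma aux_q_contOn (hdyn : PhysarumDynamics tail head ℓ b σ p) (e : E) :
    ContinuousOn (fun s => current tail head ℓ σ p s e) (Set.Ici (0:ℝ)) := by
  simp only [current, field]
  exact (aux_x_contOn hdyn e).mul
    ((((continuous_apply (tail e)).comp_continuousOn hdyn.contp).sub
      ((continuous_apply (head e)).comp_continuousOn hdyn.contp)).div_const _)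

lemma aux_ode (hdyn : PhysarumDynamics tail head ℓ b σ p) (e : E) {t : ℝ} (ht : 0 ≤ t) :
    Real.exp t * σ t e - σ 0 e
      = ∫ s in (0:ℝ)..t, Real.exp s * current tail head ℓ σ p s e := by
  have hIcc : Set.Icc (0:ℝ) t ⊆ Set.Ici 0 := Set.Icc_subset_Ici_self
  have hcont : ContinuousOn (fun s => Real.exp s * σ s e) (Set.Icc 0 t) :=
    Real.continuous_exp.continuousOn.mul ((aux_x_contOn hdyn e).mono hIcc)
  have hderiv : ∀ s ∈ Set.Ioo (0:ℝ) t,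
      HasDerivWithinAt (fun u => Real.exp u * σ u e)
        (Real.exp s * current tail head ℓ σ p s e) (Set.Ioi s) s := by
    intro s hs
    have hmem : Set.Ici (0:ℝ) ∈ nhds s :=
      Filter.mem_of_superset (Ioi_mem_nhds hs.1) Set.Ioi_subset_Ici_self
    have hx : HasDerivAt (fun u => σ u e)
        (current tail head ℓ σ p s e - σ s e) s :=
      (hdyn.dyn s (Set.mem_Ici.2 hs.1.le) e).hasDerivAt hmem
    have h2 : HasDerivAt (fun u => Real.exp u * σ u e)
        (Real.exp s * σ s e + Real.exp s * (current tail head ℓ σ p s e - σ s e)) s :=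
      (Real.hasDerivAt_exp s).mul hx
    have h3 : Real.exp s * σ s e + Real.exp s * (current tail head ℓ σ p s e - σ s e)
        = Real.exp s * current tail head ℓ σ p s e := by ring
    exact (h3 ▸ h2).hasDerivWithinAt
  have hint : IntervalIntegrable (fun s => Real.exp s * current tail head ℓ σ p s e)
      MeasureTheory.volume 0 t := by
    apply ContinuousOn.intervalIntegrable
    rw [Set.uIcc_of_le ht]
    exact Real.continuous_exp.continuousOn.mul ((aux_q_contOn hdyn e).mono hIcc)
  have hres := intervalIntegral.integral_eq_sub_of_hasDeriv_right_of_le ht hcont hderiv hint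
  rw [hres, Real.exp_zero, one_mul]

end AuxProof2
section AuxProof3

variable {V E : Type*} [Fintype V] [Fintype E] [DecidableEq V] [DecidableEq E]

/-- Signed indicator of the cut `S`. -/
def chiS (tail head : E → V) (S : Finset V) : E → ℝ :=
  fun e => (if tail e ∈ S then 1 else 0) - (if head e ∈ S then 1 else 0)

lemma aux_cut_eq' (tail head : E → V) (hloops : NoLoops tail head)
    (f : E → ℝ) (S : Finset V) :
    ∑ v ∈ S, (incMatrix tail head).mulVec f v = ∑ e, chiS tail head S e * f e :=
  aux_cut_eq tail head hloops f S

variable {tail head : E → V} {ℓ : E → ℝ} {b : V → ℝ} {σ : ℝ → E → ℝ} {p : ℝ → V → ℝ}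

lemma aux_gap (hloops : NoLoops tail head) (hconn : IsConnectedGraph tail head)
    (hℓ : ∀ e, 0 < ℓ e)
    (hdyn : PhysarumDynamics tail head ℓ b σ p)
    (L : ℝ) (hL : 0 < L) (hLle : ∀ e, ℓ e ≤ L)
    (A : ℝ) (hA : A = ∑ e, σ 0 e)
    (β : ℝ) (hβpos : 0 < β) (hβle : ∀ S : Finset V, 0 < ∑ v ∈ S, b v → β ≤ ∑ v ∈ S, b v)
    (t : ℝ) (ht : 0 ≤ t) (hε : Real.exp (-t) ≤ β / (2 * (β + A)))
    (S : Finset V) (i0 : V) (hi0 : i0 ∈ S) (j0 : V) (hj0 : j0 ∉ S)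
    (g : ℝ) (hg : 0 < g)
    (hgapOut : ∀ e, tail e ∈ S → head e ∉ S → g ≤ p t (tail e) - p t (head e))
    (hgapIn : ∀ e, tail e ∉ S → head e ∈ S → g ≤ p t (head e) - p t (tail e)) :
    g ≤ 2 * L := by
  classical
  set bS : ℝ := ∑ v ∈ S, b v with hbS
  set X : ℝ := ∑ e, (if (tail e ∈ S ∧ head e ∉ S) ∨ (tail e ∉ S ∧ head e ∈ S)
    then σ t e else 0) with hX
  have hA0 : 0 ≤ A := hA ▸ Finset.sum_nonneg (fun e _ => (hdyn.pos 0 le_rfl e).le)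
  -- the current is a flow at every time
  have hflow : ∀ s, 0 ≤ s → ∑ e, chiS tail head S e * current tail head ℓ σ p s e = bS := by
    intro s hs
    have h := aux_current_flow tail head hloops ℓ b (σ s) (p s) (hdyn.kirchhoff s hs)
    have h2 := aux_cut_eq' tail head hloops
      (fun e => σ s e * ((p s (tail e) - p s (head e)) / ℓ e)) S
    rw [h] at h2
    simp only [current, field]
    exact h2.symm
  -- edgewise lower bound on the cut current
  have hedge : ∀ e : E, (if (tail e ∈ S ∧ head e ∉ S) ∨ (tail e ∉ S ∧ head e ∈ S)
      then g / L * σ t e else 0) ≤ chiS tail head S e * current tail head ℓ σ p t e := by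
    intro e
    have hσe : 0 ≤ σ t e := (hdyn.pos t ht e).le
    by_cases h1e : tail e ∈ S <;> by_cases h2e : head e ∈ S
    · simp [chiS, current, h1e, h2e]
    · -- out-arc
      have hd := hgapOut e h1e h2e
      have hdiv : g / L ≤ (p t (tail e) - p t (head e)) / ℓ e :=
        div_le_div₀ (by linarith) hd (hℓ e) (hLle e)
      have : g / L * σ t e ≤ σ t e * ((p t (tail e) - p t (head e)) / ℓ e) := by
        rw [mul_comm]
        exact mul_le_mul_of_nonneg_left hdiv hσe
      simpa [chiS, current, field, h1e, h2e] using this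
    · -- in-arc
      have hd := hgapIn e h1e h2e
      have hdiv : g / L ≤ (p t (head e) - p t (tail e)) / ℓ e :=
        div_le_div₀ (by linarith) hd (hℓ e) (hLle e)
      have h5 : g / L * σ t e ≤ σ t e * ((p t (head e) - p t (tail e)) / ℓ e) := by
        rw [mul_comm]
        exact mul_le_mul_of_nonneg_left hdiv hσe
      have h6 : chiS tail head S e * current tail head ℓ σ p t e
          = σ t e * ((p t (head e) - p t (tail e)) / ℓ e) := by
        simp only [chiS, current, field, if_neg h1e, if_pos h2e]
        ring
      rw [h6]
      simpa [h1e, h2e] using h5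
    · simp [chiS, current, h1e, h2e]
  have h1 : g / L * X ≤ bS := by
    rw [hX, Finset.mul_sum, ← hflow t ht]
    refine Finset.sum_le_sum fun e _ => ?_
    have := hedge e
    by_cases hpe : (tail e ∈ S ∧ head e ∉ S) ∨ (tail e ∉ S ∧ head e ∈ S) <;>
      simp [hpe] at this ⊢ <;> linarith [this]
  -- a crossing edge exists, hence X > 0
  have hXpos : 0 < X := by
    obtain ⟨e0, he0⟩ := aux_cross tail head S (hconn i0 j0) hi0 hj0
    have hterm : ∀ e : E, 0 ≤ (if (tail e ∈ S ∧ head e ∉ S) ∨ (tail e ∉ S ∧ head e ∈ S)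
        then σ t e else 0) := by
      intro e
      by_cases hpe : (tail e ∈ S ∧ head e ∉ S) ∨ (tail e ∉ S ∧ head e ∈ S) <;>
        simp [hpe, (hdyn.pos t ht e).le]
    have hle := Finset.single_le_sum (f := fun e => (if (tail e ∈ S ∧ head e ∉ S) ∨
      (tail e ∉ S ∧ head e ∈ S) then σ t e else 0)) (fun e _ => hterm e) (Finset.mem_univ e0)
    have hle2 : (if (tail e0 ∈ S ∧ head e0 ∉ S) ∨ (tail e0 ∉ S ∧ head e0 ∈ S)
        then σ t e0 else 0) ≤ X := hle
    rw [if_pos he0] at hle2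
    exact lt_of_lt_of_le (hdyn.pos t ht e0) hle2
  have hbSpos : 0 < bS :=
    lt_of_lt_of_le (by positivity) h1
  have hβbS : β ≤ bS := hβle S hbSpos
  -- integral identity
  have hqint : ∀ e : E, IntervalIntegrable
      (fun s => chiS tail head S e * (Real.exp s * current tail head ℓ σ p s e))
      MeasureTheory.volume 0 t := by
    intro e
    apply ContinuousOn.intervalIntegrable
    rw [Set.uIcc_of_le ht]
    exact (continuousOn_const.mul (Real.continuous_exp.continuousOn.mul
      ((aux_q_contOn hdyn e).mono Set.Icc_subset_Ici_self)))
  have h3 : ∑ e, chiS tail head S e * (Real.exp t * σ t e - σ 0 e)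
      = (Real.exp t - 1) * bS := by
    have e1 : ∀ e : E, chiS tail head S e * (Real.exp t * σ t e - σ 0 e)
        = ∫ s in (0:ℝ)..t, chiS tail head S e * (Real.exp s * current tail head ℓ σ p s e) := by
      intro e
      rw [intervalIntegral.integral_const_mul, ← aux_ode hdyn e ht]
    rw [Finset.sum_congr rfl (fun e _ => e1 e),
      ← intervalIntegral.integral_finset_sum (fun e _ => hqint e)]
    have e2 : Set.EqOn
        (fun s => ∑ e, chiS tail head S e * (Real.exp s * current tail head ℓ σ p s e))
        (fun s => bS * Real.exp s) (Set.uIcc 0 t) := by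
      intro s hs
      rw [Set.uIcc_of_le ht] at hs
      have hfl := hflow s hs.1
      simp only
      calc ∑ e, chiS tail head S e * (Real.exp s * current tail head ℓ σ p s e)
          = Real.exp s * ∑ e, chiS tail head S e * current tail head ℓ σ p s e := by
            rw [Finset.mul_sum]
            exact Finset.sum_congr rfl fun e _ => by ring
        _ = bS * Real.exp s := by rw [hfl]; ring
    rw [intervalIntegral.integral_congr e2, intervalIntegral.integral_const_mul,
      integral_exp, Real.exp_zero]
    ring
  -- lower bound on the cut conductance X
  have hw : -A ≤ ∑ e, chiS tail head S e * σ 0 e := by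
    have : ∀ e : E, -(σ 0 e) ≤ chiS tail head S e * σ 0 e := by
      intro e
      have hσe : 0 ≤ σ 0 e := (hdyn.pos 0 le_rfl e).le
      by_cases h1e : tail e ∈ S <;> by_cases h2e : head e ∈ S <;>
        simp [chiS, h1e, h2e] <;> linarith
    calc -A = ∑ e, -(σ 0 e) := by rw [hA, ← Finset.sum_neg_distrib]
      _ ≤ _ := Finset.sum_le_sum fun e _ => this e
  have h6 : ∑ e, chiS tail head S e * σ t e ≤ X := by
    rw [hX]
    refine Finset.sum_le_sum fun e _ => ?_
    have hσe : 0 ≤ σ t e := (hdyn.pos t ht e).le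
    by_cases h1e : tail e ∈ S <;> by_cases h2e : head e ∈ S <;>
      simp [chiS, h1e, h2e] <;> linarith
  have hEt : Real.exp t * Real.exp (-t) = 1 := by
    rw [← Real.exp_add]; simp
  have hu : Real.exp t * (∑ e, chiS tail head S e * σ t e)
      - (∑ e, chiS tail head S e * σ 0 e) = (Real.exp t - 1) * bS := by
    rw [← h3, Finset.mul_sum, ← Finset.sum_sub_distrib]
    exact Finset.sum_congr rfl fun e _ => by ring
  have hXlb : (1 - Real.exp (-t)) * bS - Real.exp (-t) * A
      ≤ ∑ e, chiS tail head S e * σ t e := by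
    have hEpos : (0:ℝ) < Real.exp t := Real.exp_pos t
    have key : Real.exp t * ((1 - Real.exp (-t)) * bS - Real.exp (-t) * A)
        = (Real.exp t - 1) * bS - A := by
      have : Real.exp t * ((1 - Real.exp (-t)) * bS - Real.exp (-t) * A)
          = (Real.exp t - Real.exp t * Real.exp (-t)) * bS - (Real.exp t * Real.exp (-t)) * A := by
        ring
      rw [this, hEt]; ring
    have h7 : Real.exp t * ((1 - Real.exp (-t)) * bS - Real.exp (-t) * A)
        ≤ Real.exp t * (∑ e, chiS tail head S e * σ t e) := by
      rw [key]; linarith [hu, hw]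
    exact le_of_mul_le_mul_left h7 hEpos
  -- ε(bS + A) ≤ bS/2
  have hεb : Real.exp (-t) * (bS + A) ≤ bS / 2 := by
    have hden1 : (0:ℝ) < 2 * (β + A) := by positivity
    have hden2 : (0:ℝ) < 2 * (bS + A) := by positivity
    have hmono : β / (2 * (β + A)) ≤ bS / (2 * (bS + A)) := by
      rw [div_le_div_iff₀ hden1 hden2]
      nlinarith [hβbS, hA0]
    have hε2 : Real.exp (-t) ≤ bS / (2 * (bS + A)) := le_trans hε hmono
    have := mul_le_mul_of_nonneg_right hε2 (by positivity : (0:ℝ) ≤ bS + A)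
    calc Real.exp (-t) * (bS + A) ≤ bS / (2 * (bS + A)) * (bS + A) := this
      _ = bS / 2 := by field_simp
  have hX2 : bS / 2 ≤ X := by
    have := le_trans hXlb h6
    nlinarith [this, hεb]
  -- conclude
  have hfin : g / L * (bS / 2) ≤ bS := by
    have : g / L * (bS / 2) ≤ g / L * X :=
      mul_le_mul_of_nonneg_left hX2 (by positivity)
    linarith [h1]
  have hgL : g / L ≤ 2 := by
    have h8 : g / L * (bS / 2) ≤ 2 * (bS / 2) := by linarith
    exact le_of_mul_le_mul_right h8 (by positivity)
  have := (div_le_iff₀ hL).1 hgL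
  linarith

end AuxProof3

theorem statement_15 {V E : Type*} [Fintype V] [Fintype E] [DecidableEq V] [DecidableEq E]
    (tail head : E → V)
    (hloops : NoLoops tail head) (hmult : NoMultiple tail head)
    (hconn : IsConnectedGraph tail head)
    (ℓ : E → ℝ) (hℓ : ∀ e, 0 < ℓ e)
    (b : V → ℝ) (hb : ∑ i, b i = 0)
    (hfeas : Feasible tail head b)
    (σ : ℝ → E → ℝ) (p : ℝ → V → ℝ)
    (hdyn : PhysarumDynamics tail head ℓ b σ p)
    (hnorm : ∀ t : ℝ, 0 ≤ t → (∀ i, 0 ≤ p t i) ∧ ∃ i, p t i = 0) :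
    ∃ pmax > (0:ℝ), ∀ t : ℝ, 0 ≤ t → ∀ i : V, |p t i| < pmax := by
  classical
  set L : ℝ := 1 + ∑ e, ℓ e with hLdef
  have hsumℓ : 0 ≤ ∑ e, ℓ e := Finset.sum_nonneg fun e _ => (hℓ e).le
  have hLpos : 0 < L := by rw [hLdef]; linarith
  have hLle : ∀ e, ℓ e ≤ L := by
    intro e
    have h1 : ℓ e ≤ ∑ f, ℓ f := Finset.single_le_sum (fun f _ => (hℓ f).le) (Finset.mem_univ e)
    rw [hLdef]; linarith
  set A : ℝ := ∑ e, σ 0 e with hAdef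
  have hA0 : 0 ≤ A := Finset.sum_nonneg fun e _ => (hdyn.pos 0 le_rfl e).le
  obtain ⟨β, hβpos, hβle⟩ :
      ∃ β : ℝ, 0 < β ∧ ∀ S : Finset V, 0 < ∑ v ∈ S, b v → β ≤ ∑ v ∈ S, b v := by
    by_cases hcs : (Finset.univ.filter (fun S : Finset V => 0 < ∑ v ∈ S, b v)).Nonempty
    · obtain ⟨S0, hS0mem, hS0min⟩ :=
        Finset.exists_min_image _ (fun S : Finset V => ∑ v ∈ S, b v) hcs
      exact ⟨∑ v ∈ S0, b v, (Finset.mem_filter.1 hS0mem).2,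
        fun S hS => hS0min S (Finset.mem_filter.2 ⟨Finset.mem_univ _, hS⟩)⟩
    · refine ⟨1, one_pos, fun S hS => absurd ?_ hcs⟩
      exact ⟨S, Finset.mem_filter.2 ⟨Finset.mem_univ _, hS⟩⟩
  set T0 : ℝ := Real.log (2 * (β + A) / β) with hT0def
  have hratio : (1:ℝ) ≤ 2 * (β + A) / β := by
    rw [le_div_iff₀ hβpos]; linarith
  have hT0nn : 0 ≤ T0 := Real.log_nonneg hratio
  have hεT0 : ∀ t : ℝ, T0 ≤ t → Real.exp (-t) ≤ β / (2 * (β + A)) := by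
    intro t htt
    have h1 : Real.exp (-t) ≤ Real.exp (-T0) := Real.exp_le_exp.2 (by linarith)
    have h2 : Real.exp (-T0) = β / (2 * (β + A)) := by
      rw [Real.exp_neg, hT0def, Real.exp_log (by positivity), inv_div]
    linarith
  -- uniform bound for large times
  have hmain : ∀ t : ℝ, T0 ≤ t → ∀ i : V, p t i ≤ 2 * L * (Fintype.card V : ℝ) := by
    intro t htT
    have ht0 : (0:ℝ) ≤ t := le_trans hT0nn htT
    have key : ∀ c : ℕ, ∀ i : V,
        (Finset.univ.filter (fun j => p t j < p t i)).card ≤ c → p t i ≤ 2 * L * (c : ℝ) := by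
      intro c
      induction c with
      | zero =>
        intro i hcard
        obtain ⟨j0, hj0⟩ := (hnorm t ht0).2
        by_contra hcon
        push_neg at hcon
        have hppos : (0:ℝ) < p t i := by simpa using hcon
        have hj0mem : j0 ∈ Finset.univ.filter (fun j => p t j < p t i) :=
          Finset.mem_filter.2 ⟨Finset.mem_univ _, by rw [hj0]; exact hppos⟩
        have := Finset.card_pos.2 ⟨j0, hj0mem⟩
        omega
      | succ c ih =>
        intro i hcard
        by_cases hF : (Finset.univ.filter (fun j => p t j < p t i)).Nonempty
        · obtain ⟨j0, hj0mem, hj0max⟩ := Finset.exists_max_image _ (fun j => p t j) hF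
          have hj0lt : p t j0 < p t i := (Finset.mem_filter.1 hj0mem).2
          set S : Finset V := Finset.univ.filter (fun v => p t j0 < p t v) with hSdef
          have hiS : i ∈ S := Finset.mem_filter.2 ⟨Finset.mem_univ _, hj0lt⟩
          have hj0S : j0 ∉ S := fun h => lt_irrefl _ (Finset.mem_filter.1 h).2
          have hSge : ∀ v, v ∈ S → p t i ≤ p t v := by
            intro v hv
            by_contra hvc
            push_neg at hvc
            have hvF : v ∈ Finset.univ.filter (fun j => p t j < p t i) :=
              Finset.mem_filter.2 ⟨Finset.mem_univ _, hvc⟩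
            exact absurd (Finset.mem_filter.1 hv).2 (not_lt.2 (hj0max v hvF))
          have hSout : ∀ v, v ∉ S → p t v ≤ p t j0 := by
            intro v hv
            by_contra hvc
            push_neg at hvc
            exact hv (Finset.mem_filter.2 ⟨Finset.mem_univ _, hvc⟩)
          have hgpos : 0 < p t i - p t j0 := by linarith
          have hgap : p t i - p t j0 ≤ 2 * L := by
            refine aux_gap hloops hconn hℓ hdyn L hLpos hLle A hAdef β hβpos hβle t ht0
              (hεT0 t htT) S i hiS j0 hj0S _ hgpos ?_ ?_
            · intro e h1e h2e
              have := hSge _ h1e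
              have := hSout _ h2e
              linarith
            · intro e h1e h2e
              have := hSge _ h2e
              have := hSout _ h1e
              linarith
          have hsub : (Finset.univ.filter (fun j => p t j < p t j0))
              ⊆ (Finset.univ.filter (fun j => p t j < p t i)).erase j0 := by
            intro j hj
            have hjlt : p t j < p t j0 := (Finset.mem_filter.1 hj).2
            refine Finset.mem_erase.2 ⟨?_, Finset.mem_filter.2 ⟨Finset.mem_univ _, by linarith⟩⟩
            intro hje
            rw [hje] at hjlt
            exact lt_irrefl _ hjlt
          have hcard2 : (Finset.univ.filter (fun j => p t j < p t j0)).card ≤ c := by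
            have h1 := Finset.card_le_card hsub
            rw [Finset.card_erase_of_mem hj0mem] at h1
            omega
          have hih := ih j0 hcard2
          have hcast : ((c + 1 : ℕ) : ℝ) = (c : ℝ) + 1 := by push_cast; ring
          rw [hcast]
          nlinarith [hLpos]
        · have hcard0 : (Finset.univ.filter (fun j => p t j < p t i)).card ≤ c := by
            rw [Finset.not_nonempty_iff_eq_empty.1 hF]; simp
          have h1 := ih i hcard0
          have hcast : ((c + 1 : ℕ) : ℝ) = (c : ℝ) + 1 := by push_cast; ring
          rw [hcast]
          nlinarith [hLpos]
    intro i
    have hcard : (Finset.univ.filter (fun j => p t j < p t i)).card ≤ Fintype.card V := by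
      have := Finset.card_filter_le (Finset.univ : Finset V) (fun j => p t j < p t i)
      simpa [Finset.card_univ] using this
    exact key (Fintype.card V) i hcard
  -- bound on the compact initial segment
  have hcont : ContinuousOn (fun t => p t) (Set.Icc 0 T0) :=
    hdyn.contp.mono Set.Icc_subset_Ici_self
  obtain ⟨C, hC⟩ := (isCompact_Icc (a := (0:ℝ)) (b := T0)).exists_bound_of_continuousOn hcont
  refine ⟨max C (2 * L * (Fintype.card V : ℝ)) + 1, ?_, ?_⟩
  · have h1 : (0:ℝ) ≤ 2 * L * (Fintype.card V : ℝ) := by positivity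
    have h2 := le_max_right C (2 * L * (Fintype.card V : ℝ))
    linarith
  · intro t ht i
    have hpi : 0 ≤ p t i := (hnorm t ht).1 i
    rw [abs_of_nonneg hpi]
    rcases le_total t T0 with hcase | hcase
    · have h1 := hC t ⟨ht, hcase⟩
      have h2 : |p t i| ≤ ‖p t‖ := by
        simpa using norm_le_pi_norm (p t) i
      rw [abs_of_nonneg hpi] at h2
      have h3 := le_max_left C (2 * L * (Fintype.card V : ℝ))
      linarith
    · have h1 := hmain t hcase i
      have h2 := le_max_right C (2 * L * (Fintype.card V : ℝ))
      linarith
end
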